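/- arXiv:2503.16208 — 2 statements merged into one kernel-verified Lean document; each statement's English description precedes it below -/
import Mathlib

section
/- Define the parity map P_n on {0,1}^{n+1} by P_n(x_1,…,x_n, y) = (x_1,…,x_n, y ⊕ (x_1 ⊕ ⋯ ⊕ x_n)). Then P_n = (H^⊗(n+1)) ∘ F_n' ∘ (H^⊗(n+1)) as unitaries on (ℂ²)^⊗(n+1), where F_n' is the fan-out unitary with the last qubit as control: F_n'|x_1,…,x_n⟩|y⟩ = |x_1⊕y,…,x_n⊕y⟩|y⟩, and H is the Hadamard gate. -/
open Matrix Finset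

/-- The single-qubit Hadamard entry H[y][x] = (−1)^{xy}/√2. -/
noncomputable def hEntry (y x : Bool) : ℂ :=
  (if x && y then (-1 : ℂ) else 1) / (Real.sqrt 2 : ℂ)

/-- The (n+1)-qubit Hadamard H^⊗(n+1) on n data qubits plus one last qubit. -/
noncomputable def HN (n : ℕ) : Matrix ((Fin n → Bool) × Bool) ((Fin n → Bool) × Bool) ℂ :=
  fun p q => (∏ i, hEntry (p.1 i) (q.1 i)) * hEntry p.2 q.2

/-- The classical action of the fan-out gate with the last qubit as control. -/
def fanOut' (n : ℕ) : (Fin n → Bool) × Bool → (Fin n → Bool) × Bool :=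
  fun q => (fun i => xor (q.1 i) q.2, q.2)

/-- The classical action of the parity gate: the last qubit receives the parity. -/
def parityMap (n : ℕ) : (Fin n → Bool) × Bool → (Fin n → Bool) × Bool :=
  fun q => (q.1, xor q.2 (decide ((Finset.univ.filter (fun i => q.1 i = true)).card % 2 = 1)))

/-- Permutation matrix of a map on basis states: M[p][q] = [p = g q]. -/
noncomputable def permMat (n : ℕ) (g : (Fin n → Bool) × Bool → (Fin n → Bool) × Bool) :
    Matrix ((Fin n → Bool) × Bool) ((Fin n → Bool) × Bool) ℂ :=
  fun p q => if p = g q then 1 else 0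

noncomputable def sgn (b : Bool) : ℂ := if b then -1 else 1

lemma hEntry_eq (y x : Bool) : hEntry y x = sgn (x && y) / (Real.sqrt 2 : ℂ) := by
  cases x <;> cases y <;> simp [hEntry, sgn]

lemma sgn_and_xor (p a b : Bool) : sgn (p && xor a b) = sgn (p && a) * sgn (p && b) := by
  cases p <;> cases a <;> cases b <;> simp [sgn]

lemma sum_sgn (a b : Bool) :
    (∑ s : Bool, sgn (s && a) * sgn (b && s)) = if a = b then 2 else 0 := by
  cases a <;> cases b <;> simp [sgn] <;> norm_num

lemma prod_sgn (n : ℕ) (f : Fin n → Bool) :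
    (∏ i, sgn (f i)) =
      if decide ((Finset.univ.filter (fun i => f i = true)).card % 2 = 1) then -1 else 1 := by
  have h1 : (∏ i, sgn (f i)) = (-1 : ℂ) ^ (Finset.univ.filter (fun i => f i = true)).card := by
    rw [← Finset.prod_const]
    rw [Finset.prod_filter]
    apply Finset.prod_congr rfl
    intro i _
    cases h : f i <;> simp [sgn, h]
  rw [h1]
  rcases Nat.even_or_odd ((Finset.univ.filter (fun i => f i = true)).card) with he | ho
  · rw [he.neg_one_pow]
    simp [Nat.even_iff.mp he]
  · rw [ho.neg_one_pow]
    simp [Nat.odd_iff.mp ho]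

lemma key (n : ℕ) (p q : (Fin n → Bool) × Bool) :
    (∑ r : (Fin n → Bool) × Bool,
      ((∏ i, sgn (r.1 i && p.1 i)) * sgn (r.2 && p.2)) *
        ((∏ i, sgn (q.1 i && xor (r.1 i) r.2)) * sgn (q.2 && r.2)))
    = if p.1 = q.1 ∧ p.2 = xor q.2 (decide ((Finset.univ.filter (fun i => q.1 i = true)).card % 2 = 1))
      then 2 ^ (n+1) else 0 := by
  rw [Fintype.sum_prod_type]
  have step1 : ∀ (a : Fin n → Bool) (b : Bool),
      ((∏ i, sgn (a i && p.1 i)) * sgn (b && p.2)) *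
        ((∏ i, sgn (q.1 i && xor (a i) b)) * sgn (q.2 && b))
      = (∏ i, sgn (a i && p.1 i) * sgn (q.1 i && a i)) *
          ((∏ i, sgn (q.1 i && b)) * (sgn (b && p.2) * sgn (q.2 && b))) := by
    intro a b
    simp_rw [sgn_and_xor, Finset.prod_mul_distrib]
    ring
  simp_rw [step1, ← Finset.mul_sum]
  rw [← Finset.sum_mul,
    ← Fintype.prod_sum fun (i : Fin n) (j : Bool) => sgn (j && p.1 i) * sgn (q.1 i && j)]
  have hA : (∏ i, ∑ j : Bool, sgn (j && p.1 i) * sgn (q.1 i && j)) =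
      if p.1 = q.1 then (2 : ℂ) ^ n else 0 := by
    simp_rw [sum_sgn]
    by_cases h : p.1 = q.1
    · simp [h]
    · obtain ⟨i, hi⟩ := Function.ne_iff.mp h
      rw [if_neg h]
      exact Finset.prod_eq_zero (Finset.mem_univ i) (by simp [hi])
  have hB : (∑ b : Bool, (∏ i, sgn (q.1 i && b)) * (sgn (b && p.2) * sgn (q.2 && b))) =
      if p.2 = xor q.2 (decide ((Finset.univ.filter (fun i => q.1 i = true)).card % 2 = 1))
      then (2 : ℂ) else 0 := by
    rw [Fintype.sum_bool]
    simp only [Bool.and_true, Bool.and_false]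
    rw [prod_sgn]
    have : (∏ i : Fin n, sgn false) = 1 := by simp [sgn]
    rw [this]
    set d := decide ((Finset.univ.filter (fun i => q.1 i = true)).card % 2 = 1) with hd
    cases d <;> cases p.2 <;> cases q.2 <;> simp [sgn] <;> norm_num
  rw [hA, hB]
  by_cases h1 : p.1 = q.1 <;>
    by_cases h2 : p.2 = xor q.2 (decide ((Finset.univ.filter (fun i => q.1 i = true)).card % 2 = 1)) <;>
      simp [h1, h2, pow_succ]

lemma fanOut'_invol (n : ℕ) (s : (Fin n → Bool) × Bool) : fanOut' n (fanOut' n s) = s := by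
  refine Prod.ext ?_ rfl
  funext i
  simp [fanOut', Bool.xor_assoc]

lemma sqrt2_sq : ((Real.sqrt 2 : ℝ) : ℂ) * ((Real.sqrt 2 : ℝ) : ℂ) = 2 := by
  norm_cast
  exact Real.mul_self_sqrt (by norm_num)

lemma HN_eq (n : ℕ) (p q : (Fin n → Bool) × Bool) :
    HN n p q = ((∏ i, sgn (q.1 i && p.1 i)) * sgn (q.2 && p.2)) / (Real.sqrt 2 : ℂ) ^ (n+1) := by
  simp only [HN, hEntry_eq, Finset.prod_div_distrib, Finset.prod_const, Finset.card_univ,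
    Fintype.card_fin]
  rw [div_mul_div_comm, pow_succ]

theorem parity_eq_hadamard_conj_fanout (n : ℕ) :
    permMat n (parityMap n) = HN n * permMat n (fanOut' n) * HN n := by
  rw [Matrix.mul_assoc]
  ext p q
  rw [Matrix.mul_apply]
  have hBC : ∀ r, (permMat n (fanOut' n) * HN n) r q = HN n (fanOut' n r) q := by
    intro r
    rw [Matrix.mul_apply]
    rw [Finset.sum_eq_single (fanOut' n r)]
    · simp [permMat, fanOut'_invol]
    · intro s _ hs
      have : r ≠ fanOut' n s := by
        intro h; apply hs; rw [h, fanOut'_invol]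
      simp [permMat, this]
    · simp
  simp_rw [hBC, HN_eq]
  have c2 : (Real.sqrt 2 : ℂ) ^ (n+1) * (Real.sqrt 2 : ℂ) ^ (n+1) = (2 : ℂ) ^ (n+1) := by
    rw [← mul_pow, sqrt2_sq]
  have hfo : ∀ r : (Fin n → Bool) × Bool,
      ((∏ i, sgn (q.1 i && (fanOut' n r).1 i)) * sgn (q.2 && (fanOut' n r).2))
      = (∏ i, sgn (q.1 i && xor (r.1 i) r.2)) * sgn (q.2 && r.2) := fun r => rfl
  simp_rw [hfo, div_mul_div_comm, c2, ← Finset.sum_div, key]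
  have h2 : ((2 : ℂ) ^ (n+1)) ≠ 0 := pow_ne_zero _ two_ne_zero
  by_cases h : p = parityMap n q
  · have h1 : p.1 = q.1 := by rw [h]; rfl
    have h2' : p.2 = xor q.2 (decide ((Finset.univ.filter (fun i => q.1 i = true)).card % 2 = 1)) := by
      rw [h]; rfl
    simp [permMat, h, h1, h2', parityMap, div_self h2]
  · have : ¬ (p.1 = q.1 ∧ p.2 = xor q.2 (decide ((Finset.univ.filter (fun i => q.1 i = true)).card % 2 = 1))) := by
      intro ⟨ha, hb⟩
      exact h (Prod.ext ha hb)
    simp only [permMat, this, if_false, zero_div, if_neg h]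
end

section
/- Every permutation π of a finite set of size N can be written as a composition of at most 3 layers of disjoint transpositions (i.e., π = σ_3 ∘ σ_2 ∘ σ_1 where each σ_i is an involution that is a product of pairwise-disjoint transpositions). -/
open Equiv Equiv.Perm

section Aux

variable {α : Type*} [Fintype α] [DecidableEq α]

private lemma cycle_zpow_eq_one {c : Equiv.Perm α} (hc : c.IsCycle) {a : α} (ha : c a ≠ a)
    {k : ℤ} (h : (c ^ k) a = a) : c ^ k = 1 := by
  have hmod := zpow_mod_orderOf c k
  have hnn : 0 ≤ k % (orderOf c : ℤ) :=
    Int.emod_nonneg k (by exact_mod_cast (orderOf_pos c).ne')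
  obtain ⟨m, hm⟩ := Int.eq_ofNat_of_zero_le hnn
  have hck : c ^ k = c ^ m := by rw [← hmod, hm, zpow_natCast]
  rw [hck] at h ⊢
  exact (hc.pow_eq_one_iff' ha).2 h

private lemma cycle_two_involutions {c : Equiv.Perm α} (hc : c.IsCycle) :
    ∃ σ τ : Equiv.Perm α, σ * σ = 1 ∧ τ * τ = 1 ∧ c = τ * σ ∧
      σ.support ⊆ c.support ∧ τ.support ⊆ c.support := by
  classical
  obtain ⟨a, ha, -⟩ := id hc
  -- choose an exponent for each point of the support
  let e : ∀ x, c x ≠ x → ℤ := fun x hx => (hc.exists_zpow_eq ha hx).choose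
  have he : ∀ x hx, (c ^ e x hx) a = x := fun x hx => (hc.exists_zpow_eq ha hx).choose_spec
  -- the "reflection" map
  let g : α → α := fun x => if hx : c x ≠ x then (c ^ (-(e x hx))) a else x
  have hg_fix : ∀ x, c x = x → g x = x := by
    intro x hx
    simp only [g]
    rw [dif_neg (not_not.2 hx)]
  have hg_mem : ∀ (i : ℤ), c ((c ^ i) a) ≠ (c ^ i) a := by
    intro i
    have : (c ^ i) a ∈ c.support := zpow_apply_mem_support.2 (mem_support.2 ha)
    exact mem_support.1 this
  have hg_apply : ∀ x (hx : c x ≠ x), g x = (c ^ (-(e x hx))) a := by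
    intro x hx
    simp only [g]
    rw [dif_pos hx]
  -- key computation: if (c ^ j) a = (c ^ i) a then (c ^ (-j)) a = (c ^ (-i)) a ... general form
  have key : ∀ (i j : ℤ), (c ^ j) a = (c ^ i) a → (c ^ (-j)) a = (c ^ (-i)) a := by
    intro i j hij
    have h0 : (c ^ (j - i)) ((c ^ i) a) = (c ^ i) a := by
      rw [← Equiv.Perm.mul_apply, ← zpow_add, show j - i + i = j from by ring, hij]
    have h2 : c ^ (j - i) = 1 := cycle_zpow_eq_one hc (hg_mem i) h0
    have h3 : c ^ (-j) * c ^ (j - i) = c ^ (-i) := by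
      rw [← zpow_add]; ring_nf
    rw [h2, mul_one] at h3
    rw [h3]
  have hg_inv : Function.Involutive g := by
    intro x
    by_cases hx : c x ≠ x
    · rw [hg_apply x hx]
      have hmem : c ((c ^ (-(e x hx))) a) ≠ (c ^ (-(e x hx))) a := hg_mem _
      rw [hg_apply _ hmem]
      have hj := he _ hmem
      have := key (-(e x hx)) (e _ hmem) hj
      rw [this, neg_neg]
      exact he x hx
    · push_neg at hx
      rw [hg_fix x hx, hg_fix x hx]
  set σ : Equiv.Perm α := hg_inv.toPerm with hσdef
  have hσ_apply : ∀ x, σ x = g x := fun _ => rfl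
  have hσσ : σ * σ = 1 := by
    ext x
    simp only [Equiv.Perm.mul_apply, hσ_apply, Equiv.Perm.one_apply, hg_inv x]
  -- σ conjugates c to c⁻¹
  have hconj : σ * c * σ = c⁻¹ := by
    ext x
    by_cases hx : c x ≠ x
    · have hx' : x = (c ^ (e x hx)) a := (he x hx).symm
      simp only [Equiv.Perm.mul_apply, hσ_apply]
      rw [hg_apply x hx]
      have h1 : c ((c ^ (-(e x hx))) a) = (c ^ (1 - e x hx)) a := by
        rw [← Equiv.Perm.mul_apply, ← zpow_one_add]; ring_nf
      rw [h1]
      have hmem : c ((c ^ (1 - e x hx)) a) ≠ (c ^ (1 - e x hx)) a := hg_mem _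
      rw [hg_apply _ hmem]
      have hj := he _ hmem
      have := key (1 - e x hx) (e _ hmem) hj
      rw [this]
      have h4 : c⁻¹ x = (c ^ (e x hx - 1)) a := by
        conv_lhs => rw [← he x hx]
        rw [← zpow_neg_one, ← Equiv.Perm.mul_apply, ← zpow_add]
        congr 1
        ring
      rw [h4]
      congr 1
      ring
    · push_neg at hx
      have hcx : c⁻¹ x = x := by
        conv_lhs => rw [← hx]
        exact Equiv.symm_apply_apply c x
      simp only [Equiv.Perm.mul_apply, hσ_apply]
      rw [hg_fix x hx, hx, hg_fix x hx, hcx]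
  refine ⟨σ, c * σ, hσσ, ?_, ?_, ?_, ?_⟩
  · calc c * σ * (c * σ) = c * (σ * c * σ) := by group
    _ = c * c⁻¹ := by rw [hconj]
    _ = 1 := by simp
  · rw [mul_assoc, hσσ, mul_one]
  · intro x hx
    rw [mem_support] at hx ⊢
    intro hcx
    exact hx (by rw [hσ_apply, hg_fix x hcx])
  · intro x hx
    have := support_mul_le c σ hx
    rw [Finset.sup_eq_union, Finset.mem_union] at this
    rcases this with h | h
    · exact h
    · rw [mem_support] at h ⊢
      intro hcx
      exact h (by rw [hσ_apply, hg_fix x hcx])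

private lemma two_involutions (π : Equiv.Perm α) :
    ∃ σ τ : Equiv.Perm α, σ * σ = 1 ∧ τ * τ = 1 ∧ π = τ * σ ∧
      σ.support ⊆ π.support ∧ τ.support ⊆ π.support := by
  induction π using Equiv.Perm.cycle_induction_on with
  | base_one => exact ⟨1, 1, by simp, by simp, by simp, by simp, by simp⟩
  | base_cycles c hc => exact cycle_two_involutions hc
  | induction_disjoint f g hd hc hf hg =>
    obtain ⟨σf, τf, hσf, hτf, hff, hσfs, hτfs⟩ := hf
    obtain ⟨σg, τg, hσg, hτg, hgg, hσgs, hτgs⟩ := hg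
    have hds := Equiv.Perm.disjoint_iff_disjoint_support.1 hd
    have dis : ∀ {p q : Equiv.Perm α}, p.support ⊆ f.support → q.support ⊆ g.support →
        Commute p q := by
      intro p q hp hq
      exact (Equiv.Perm.disjoint_iff_disjoint_support.2
        (Finset.disjoint_of_subset_left hp (Finset.disjoint_of_subset_right hq hds))).commute
    refine ⟨σf * σg, τf * τg, ?_, ?_, ?_, ?_, ?_⟩
    · calc σf * σg * (σf * σg) = σf * σf * (σg * σg) := by
            rw [mul_assoc, mul_assoc, ← mul_assoc σg, (dis hσfs hσgs).symm.eq, mul_assoc]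
      _ = 1 := by rw [hσf, hσg, one_mul]
    · calc τf * τg * (τf * τg) = τf * τf * (τg * τg) := by
            rw [mul_assoc, mul_assoc, ← mul_assoc τg, (dis hτfs hτgs).symm.eq, mul_assoc]
      _ = 1 := by rw [hτf, hτg, one_mul]
    · calc f * g = τf * σf * (τg * σg) := by rw [← hff, ← hgg]
      _ = τf * τg * (σf * σg) := by
            rw [mul_assoc, mul_assoc, ← mul_assoc σf, (dis hσfs hτgs).eq, mul_assoc]
    · intro x hx
      have := support_mul_le σf σg hx
      rw [Finset.sup_eq_union, Finset.mem_union] at this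
      rw [hd.support_mul, Finset.mem_union]
      exact this.imp (fun h => hσfs h) (fun h => hσgs h)
    · intro x hx
      have := support_mul_le τf τg hx
      rw [Finset.sup_eq_union, Finset.mem_union] at this
      rw [hd.support_mul, Finset.mem_union]
      exact this.imp (fun h => hτfs h) (fun h => hτgs h)

end Aux

/-- Every permutation of a finite set of size N is a composition of at most
3 layers of disjoint transpositions, i.e. 3 involutions (an involution of a
finite set is exactly a product of pairwise-disjoint transpositions). -/
theorem perm_eq_three_involutions (N : ℕ) (π : Equiv.Perm (Fin N)) :
    ∃ σ₁ σ₂ σ₃ : Equiv.Perm (Fin N),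
      σ₁ * σ₁ = 1 ∧ σ₂ * σ₂ = 1 ∧ σ₃ * σ₃ = 1 ∧ π = σ₃ * σ₂ * σ₁ := by
  obtain ⟨σ, τ, hσ, hτ, hπ, -, -⟩ := two_involutions π
  exact ⟨1, σ, τ, by simp, hσ, hτ, by simp [hπ]⟩
end
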